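/- Any solution z of z'(t) = -λ c σ(z(t) - τ) with λ, c > 0 tends to -∞ as t → ∞; in particular for any threshold M there is a finite time T with z(T) < M. -/
import Mathlib


open Filter

noncomputable def sigmoid (t : ℝ) : ℝ := 1 / (1 + Real.exp (-t))

lemma sigmoid_pos (x : ℝ) : 0 < sigmoid x := by
  unfold sigmoid; positivity

lemma sigmoid_mono : Monotone sigmoid := by
  intro x y hxy
  unfold sigmoid
  apply one_div_le_one_div_of_le (by positivity)
  have := Real.exp_le_exp.mpr (neg_le_neg hxy)
  linarith

/-- Any solution of `z'(t) = -λ c σ(z(t)-τ)` with `λ, c > 0` tends to `-∞` as `t → ∞`;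
in particular, for every threshold `M` there is a finite time `T` with `z T < M`. -/
theorem ode_solution_tendsto_atBot (lam c τ : ℝ) (hlam : 0 < lam) (hc : 0 < c)
    (z : ℝ → ℝ)
    (hz : ∀ t : ℝ, HasDerivAt z (-(lam * c * sigmoid (z t - τ))) t) :
    Tendsto z atTop atBot ∧ ∀ M : ℝ, ∃ T : ℝ, z T < M := by
  have hkpos : 0 < lam * c := mul_pos hlam hc
  have hdiff : Differentiable ℝ z := fun t => (hz t).differentiableAt
  have hanti : Antitone z := by
    apply antitone_of_deriv_nonpos hdiff
    intro t
    rw [(hz t).deriv]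
    have := sigmoid_pos (z t - τ)
    nlinarith
  have key : ∀ M : ℝ, ∃ T : ℝ, z T < M := by
    intro M
    by_contra h
    push_neg at h
    set δ := sigmoid (M - τ) with hδ
    have hδpos : 0 < δ := sigmoid_pos _
    set g : ℝ → ℝ := fun t => z t + lam * c * δ * t with hg
    have hganti : Antitone g := by
      apply antitone_of_deriv_nonpos
      · exact hdiff.add (by fun_prop)
      · intro t
        have hd : HasDerivAt g (-(lam * c * sigmoid (z t - τ)) + lam * c * δ) t := by
          have h2 : HasDerivAt (fun t : ℝ => lam * c * δ * t) (lam * c * δ) t := by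
            simpa using (hasDerivAt_id t).const_mul (lam * c * δ)
          exact (hz t).add h2
        rw [hd.deriv]
        have hle : δ ≤ sigmoid (z t - τ) := sigmoid_mono (by linarith [h t])
        nlinarith
    set T : ℝ := (z 0 - M) / (lam * c * δ) + 1 with hT
    have hT0 : 0 ≤ T := by
      have : 0 ≤ (z 0 - M) / (lam * c * δ) := by
        apply div_nonneg _ (by positivity)
        linarith [h 0]
      rw [hT]; linarith
    have := hganti hT0
    simp only [hg, mul_zero, add_zero] at this
    have hzT : z T ≤ z 0 - lam * c * δ * T := by linarith
    have hTval : lam * c * δ * T = (z 0 - M) + lam * c * δ := by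
      rw [hT]; field_simp
    have := h T
    nlinarith
  refine ⟨tendsto_atBot.2 fun b => ?_, key⟩
  obtain ⟨T, hTb⟩ := key b
  filter_upwards [eventually_ge_atTop T] with t ht
  exact le_trans (hanti ht) hTb.le
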